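/- arXiv:2604.20573 — 4 statements merged into one kernel-verified Lean document; each statement's English description precedes it below -/
import Mathlib

section
/- Let r, s ∈ [1/2, 1]. If r·s ≥ 1/2 then 4√2·√(r² + (1−r)²)·√(s² + (1−s)²) ≥ 4 − 8(1−r)(1−s), with equality when r·s = 1/2. -/
theorem stmt_4 :
    ∀ r ∈ Set.Icc (1/2 : ℝ) 1, ∀ s ∈ Set.Icc (1/2 : ℝ) 1,
      (r * s ≥ 1/2 →
        4 * Real.sqrt 2 * Real.sqrt (r^2 + (1 - r)^2) * Real.sqrt (s^2 + (1 - s)^2)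
          ≥ 4 - 8 * (1 - r) * (1 - s)) ∧
      (r * s = 1/2 →
        4 * Real.sqrt 2 * Real.sqrt (r^2 + (1 - r)^2) * Real.sqrt (s^2 + (1 - s)^2)
          = 4 - 8 * (1 - r) * (1 - s)) := by
  rintro r ⟨hr1, hr2⟩ s ⟨hs1, hs2⟩
  set A := Real.sqrt (r^2 + (1 - r)^2) with hA
  set B := Real.sqrt (s^2 + (1 - s)^2) with hB
  have hA0 : 0 ≤ A := Real.sqrt_nonneg _
  have hB0 : 0 ≤ B := Real.sqrt_nonneg _
  have hS0 : 0 ≤ Real.sqrt 2 := Real.sqrt_nonneg _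
  have hS2 : Real.sqrt 2 ^ 2 = 2 := Real.sq_sqrt (by norm_num)
  have hA2 : A ^ 2 = r^2 + (1 - r)^2 := Real.sq_sqrt (by positivity)
  have hB2 : B ^ 2 = s^2 + (1 - s)^2 := Real.sq_sqrt (by positivity)
  have hR : (2:ℝ) ≤ 4 - 8 * (1 - r) * (1 - s) := by nlinarith
  have hL0 : (0:ℝ) ≤ 4 * Real.sqrt 2 * A * B := by positivity
  have hsq : (4 * Real.sqrt 2 * A * B)^2 = 32 * (r^2 + (1-r)^2) * (s^2 + (1-s)^2) := by
    have h1 : (4 * Real.sqrt 2 * A * B)^2 = 16 * Real.sqrt 2 ^ 2 * A ^ 2 * B ^ 2 := by ring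
    rw [h1, hS2, hA2, hB2]; ring
  have hdiff : 32 * (r^2 + (1-r)^2) * (s^2 + (1-s)^2) - (4 - 8 * (1 - r) * (1 - s))^2
      = (8 * r * s - 4)^2 := by ring
  constructor
  · intro h
    have key : (4 - 8 * (1 - r) * (1 - s))^2 ≤ (4 * Real.sqrt 2 * A * B)^2 := by
      rw [hsq]
      nlinarith [sq_nonneg (8 * r * s - 4)]
    nlinarith [key, hL0, hR]
  · intro h
    have key : (4 * Real.sqrt 2 * A * B)^2 = (4 - 8 * (1 - r) * (1 - s))^2 := by
      rw [hsq]
      linear_combination hdiff + (64 * r * s - 32) * h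
    have hR0 : (0:ℝ) ≤ 4 - 8 * (1 - r) * (1 - s) := by linarith
    calc 4 * Real.sqrt 2 * A * B
        = Real.sqrt ((4 * Real.sqrt 2 * A * B)^2) := (Real.sqrt_sq hL0).symm
      _ = Real.sqrt ((4 - 8 * (1 - r) * (1 - s))^2) := by rw [key]
      _ = 4 - 8 * (1 - r) * (1 - s) := Real.sqrt_sq hR0
end

section
/- Let ε_a, ε_b ∈ [0, 1/2] with (1−ε_a)(1−ε_b) ≤ 1/2. Then 4√2·√((1−ε_a)² + ε_a²)·√((1−ε_b)² + ε_b²) ≥ 4 − 8·ε_a·ε_b. -/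
theorem stmt_6 :
    ∀ εa ∈ Set.Icc (0 : ℝ) (1/2), ∀ εb ∈ Set.Icc (0 : ℝ) (1/2),
      (1 - εa) * (1 - εb) ≤ 1/2 →
      4 * Real.sqrt 2 * Real.sqrt ((1 - εa)^2 + εa^2) * Real.sqrt ((1 - εb)^2 + εb^2)
        ≥ 4 - 8 * εa * εb := by
  rintro a ⟨ha0, ha1⟩ b ⟨hb0, hb1⟩ h
  have hA : (0:ℝ) ≤ (1 - a)^2 + a^2 := by positivity
  have hB : (0:ℝ) ≤ (1 - b)^2 + b^2 := by positivity
  have key : (1 - 2*a*b)^2 ≤ 2 * (((1 - a)^2 + a^2) * ((1 - b)^2 + b^2)) := by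
    nlinarith [sq_nonneg (a - b), sq_nonneg (a + b - 1), sq_nonneg (a*b), mul_nonneg ha0 hb0,
      mul_nonneg (mul_nonneg ha0 hb0) (mul_nonneg ha0 hb0),
      mul_nonneg (sub_nonneg.2 ha1) (sub_nonneg.2 hb1), sq_nonneg ((1-a)*(1-b) - a*b)]
  have h1 : (1 - 2*a*b) ≤ Real.sqrt (2 * (((1 - a)^2 + a^2) * ((1 - b)^2 + b^2))) := by
    rcases le_or_gt (1 - 2*a*b) 0 with hle | hgt
    · exact hle.trans (Real.sqrt_nonneg _)
    · exact (Real.le_sqrt hgt.le (by positivity)).2 key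
  have h2 : Real.sqrt (2 * (((1 - a)^2 + a^2) * ((1 - b)^2 + b^2)))
      = Real.sqrt 2 * Real.sqrt ((1 - a)^2 + a^2) * Real.sqrt ((1 - b)^2 + b^2) := by
    rw [Real.sqrt_mul (by norm_num), Real.sqrt_mul hA, mul_assoc]
  rw [h2] at h1
  nlinarith [h1]
end

section
/- For ε ∈ (1 − 1/√2, 1/2], we have 4 − 8ε² < 4√2·((1−ε)² + ε²), i.e., the quantum bound strictly exceeds the local bound for binary symmetric input leakage with crossover probability ε. -/
theorem stmt_8 :
    ∀ ε : ℝ, 1 - 1 / Real.sqrt 2 < ε → ε ≤ 1/2 →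
      4 - 8 * ε^2 < 4 * Real.sqrt 2 * ((1 - ε)^2 + ε^2) := by
  intro ε h1 h2
  have hs : Real.sqrt 2 ^ 2 = 2 := Real.sq_sqrt (by norm_num)
  have hpos : (0:ℝ) < Real.sqrt 2 := Real.sqrt_pos.mpr (by norm_num)
  have h1' : Real.sqrt 2 * (1 - ε) < 1 := by
    have h : 1 - ε < 1 / Real.sqrt 2 := by linarith
    calc Real.sqrt 2 * (1 - ε) < Real.sqrt 2 * (1 / Real.sqrt 2) := by
          exact mul_lt_mul_of_pos_left h hpos
      _ = 1 := by field_simp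
  nlinarith [sq_nonneg (1 - ε), sq_nonneg ε, hs, hpos, mul_pos hpos hpos,
    sq_nonneg (Real.sqrt 2 * (1-ε) - 1), mul_nonneg (le_of_lt hpos) (sq_nonneg (1-ε))]
end

section
/- Let P be a local behavior on binary inputs and outputs, i.e., P(a,b|x,y) = Σ_λ q_λ · [a = a_x^λ] · [b = b_y^λ] for a probability distribution q over a finite set Λ and deterministic response functions a^λ : X → {0,1}, b^λ : Y → {0,1}. Then the CHSH value S[P] = Σ_{a,b,x,y} (−1)^{a+b+xy} P(a,b|x,y) satisfies |S[P]| ≤ 2. -/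
lemma chsh_det (f g : Fin 2 → Fin 2) :
    |∑ x : Fin 2, ∑ y : Fin 2,
      (-1 : ℝ) ^ ((f x : ℕ) + (g y : ℕ) + (x : ℕ) * (y : ℕ))| ≤ 2 := by
  have h0 : f 0 = 0 ∨ f 0 = 1 := by omega
  have h1 : f 1 = 0 ∨ f 1 = 1 := by omega
  have h2 : g 0 = 0 ∨ g 0 = 1 := by omega
  have h3 : g 1 = 0 ∨ g 1 = 1 := by omega
  rcases h0 with h0 | h0 <;> rcases h1 with h1 | h1 <;> rcases h2 with h2 | h2 <;>
    rcases h3 with h3 | h3 <;> simp [Fin.sum_univ_two, h0, h1, h2, h3] <;> norm_num [abs_le]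

theorem stmt_11 {Λ : Type*} [Fintype Λ]
    (q : Λ → ℝ) (hq : ∀ l, 0 ≤ q l) (hq1 : ∑ l, q l = 1)
    (ar : Λ → Fin 2 → Fin 2) (br : Λ → Fin 2 → Fin 2)
    (P : Fin 2 → Fin 2 → Fin 2 → Fin 2 → ℝ)
    (hP : ∀ a b x y, P a b x y =
      ∑ l, q l * (if a = ar l x then 1 else 0) * (if b = br l y then 1 else 0)) :
    |∑ a : Fin 2, ∑ b : Fin 2, ∑ x : Fin 2, ∑ y : Fin 2,
      (-1 : ℝ) ^ ((a : ℕ) + (b : ℕ) + (x : ℕ) * (y : ℕ)) * P a b x y| ≤ 2 := by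
  have key : (∑ a : Fin 2, ∑ b : Fin 2, ∑ x : Fin 2, ∑ y : Fin 2,
      (-1 : ℝ) ^ ((a : ℕ) + (b : ℕ) + (x : ℕ) * (y : ℕ)) * P a b x y)
      = ∑ l, q l * ∑ x : Fin 2, ∑ y : Fin 2,
        (-1 : ℝ) ^ ((ar l x : ℕ) + (br l y : ℕ) + (x : ℕ) * (y : ℕ)) := by
    simp only [hP, Fin.sum_univ_two, Finset.mul_sum, ← Finset.sum_add_distrib]
    refine Finset.sum_congr rfl fun l _ => ?_
    have h0 : ar l 0 = 0 ∨ ar l 0 = 1 := by omega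
    have h1 : ar l 1 = 0 ∨ ar l 1 = 1 := by omega
    have h2 : br l 0 = 0 ∨ br l 0 = 1 := by omega
    have h3 : br l 1 = 0 ∨ br l 1 = 1 := by omega
    rcases h0 with h0 | h0 <;> rcases h1 with h1 | h1 <;> rcases h2 with h2 | h2 <;>
      rcases h3 with h3 | h3 <;> rw [h0, h1, h2, h3] <;> norm_num <;> ring
  rw [key]
  calc |∑ l, q l * _| ≤ ∑ l, |q l * ∑ x : Fin 2, ∑ y : Fin 2,
        (-1 : ℝ) ^ ((ar l x : ℕ) + (br l y : ℕ) + (x : ℕ) * (y : ℕ))| :=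
        Finset.abs_sum_le_sum_abs _ _
    _ ≤ ∑ l, q l * 2 := by
        refine Finset.sum_le_sum fun l _ => ?_
        rw [abs_mul, abs_of_nonneg (hq l)]
        exact mul_le_mul_of_nonneg_left (chsh_det (ar l) (br l)) (hq l)
    _ = 2 := by rw [← Finset.sum_mul, hq1, one_mul]
end
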